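/- arXiv:2203.11510 — 3 statements merged into one kernel-verified Lean document; each statement's English description precedes it below -/
import Mathlib

section
/- Let f_A: ℝⁿ → ℝⁿ, and define on ℝ^{n+2} (state y = (x,w,t)) the vector fields f_aux(y) = (0, -γ(ψ(x)-1), 0) and f_DF(y) = 2(f_A(x), 0, 1) - f_aux(y), where γ(x) = a x²/(1+x²), a > 0, and ψ is smooth. Let c(y) = w. Then at any point y with w = 0 and ψ(x) < 1: ∇c(y)ᵀ f_aux(y) < 0, ∇c(y)ᵀ f_DF(y) > 0, and the unique convex combination θ₁ f_DF(y) + θ₂ f_aux(y) with θ₁+θ₂=1, θ₁,θ₂ ≥ 0 whose w-component vanishes is given by θ₁ = θ₂ = ½, which equals (f_A(x), 0, 1). -/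
theorem stmt_7 (n : ℕ) (fA : (Fin n → ℝ) → (Fin n → ℝ))
    (ψ : (Fin n → ℝ) → ℝ) (hψ : ContDiff ℝ (⊤ : ℕ∞) ψ)
    (a : ℝ) (ha : 0 < a) (γ : ℝ → ℝ)
    (hγ : ∀ x, γ x = a * x ^ 2 / (1 + x ^ 2))
    (faux fDF : ((Fin n → ℝ) × ℝ × ℝ) → ((Fin n → ℝ) × ℝ × ℝ))
    (hfaux : ∀ y, faux y = (0, -γ (ψ y.1 - 1), 0))
    (hfDF : ∀ y, fDF y = (2 : ℝ) • ((fA y.1, 0, 1) : (Fin n → ℝ) × ℝ × ℝ) - faux y) :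
    ∀ y : (Fin n → ℝ) × ℝ × ℝ, y.2.1 = 0 → ψ y.1 < 1 →
      (faux y).2.1 < 0 ∧
      0 < (fDF y).2.1 ∧
      (∃! θ : ℝ × ℝ, 0 ≤ θ.1 ∧ 0 ≤ θ.2 ∧ θ.1 + θ.2 = 1 ∧
        (θ.1 • fDF y + θ.2 • faux y).2.1 = 0) ∧
      (1 / 2 : ℝ) • fDF y + (1 / 2 : ℝ) • faux y = ((fA y.1, 0, 1) : (Fin n → ℝ) × ℝ × ℝ) := by
  intro y hw hψy
  have hs : ψ y.1 - 1 ≠ 0 := sub_ne_zero.mpr (ne_of_lt hψy)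
  have hγpos : 0 < γ (ψ y.1 - 1) := by
    rw [hγ]
    have h1 : 0 < 1 + (ψ y.1 - 1) ^ 2 := by positivity
    have h2 : 0 < (ψ y.1 - 1) ^ 2 := by positivity
    positivity
  have haux : (faux y).2.1 = -γ (ψ y.1 - 1) := by rw [hfaux]
  have hdf : (fDF y).2.1 = γ (ψ y.1 - 1) := by
    rw [hfDF, hfaux]; simp
  refine ⟨by rw [haux]; linarith, by rw [hdf]; linarith, ?_, ?_⟩
  · refine ⟨(1/2, 1/2), ⟨by norm_num, by norm_num, by norm_num, ?_⟩, ?_⟩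
    · simp [Prod.snd_add, haux, hdf]
    · rintro ⟨θ1, θ2⟩ ⟨h1, h2, h3, h4⟩
      simp only [Prod.snd_add, Prod.fst_add, Prod.smul_snd, Prod.smul_fst, smul_eq_mul,
        haux, hdf] at h4
      have : θ1 = θ2 := by
        have := hγpos
        nlinarith
      have hθ1 : θ1 = 1/2 := by linarith
      have hθ2 : θ2 = 1/2 := by linarith
      simp [hθ1, hθ2, Prod.ext_iff]
  · rw [hfDF]
    ext <;> simp <;> ring
end

section
/- Let ψ: ℝⁿ → ℝ be C¹ and let a trajectory x: [0, T] → ℝⁿ be uniformly Lipschitz continuous with Lipschitz constant L, and suppose ‖∇ψ‖ ≤ K on the range of x. If 0 ≤ t₁ < t₂ ≤ T with ψ(x(t₁)) = 0 and ψ(x(t₂)) = 1, then t₂ - t₁ ≥ 1/(K·L). Consequently, the number of transitions of ψ(x(·)) between the values 0 and 1 on [0, T] is at most ⌈T·K·L⌉ + 1, i.e., finite. -/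
theorem stmt_17 (n : ℕ) (ψ : (Fin n → ℝ) → ℝ) (hψ : ContDiff ℝ 1 ψ)
    (T K L : ℝ) (hT : 0 ≤ T) (hL : 0 ≤ L)
    (x : ℝ → Fin n → ℝ)
    (hx : LipschitzOnWith L.toNNReal x (Set.Icc 0 T))
    (hK : ∀ t ∈ Set.Icc (0 : ℝ) T, ‖fderiv ℝ ψ (x t)‖ ≤ K) :
    (∀ t₁ t₂ : ℝ, t₁ ∈ Set.Icc 0 T → t₂ ∈ Set.Icc 0 T → t₁ < t₂ →
      ψ (x t₁) = 0 → ψ (x t₂) = 1 → 1 / (K * L) ≤ t₂ - t₁) ∧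
    ∀ (N : ℕ) (ts : Fin (N + 1) → ℝ), StrictMono ts →
      (∀ i, ts i ∈ Set.Icc 0 T) →
      (∀ i : Fin N,
        (ψ (x (ts i.castSucc)) = 0 ∧ ψ (x (ts i.succ)) = 1) ∨
        (ψ (x (ts i.castSucc)) = 1 ∧ ψ (x (ts i.succ)) = 0)) →
      (N : ℤ) ≤ ⌈T * K * L⌉ + 1 := by
  -- distance bound from Lipschitz
  have hdist : ∀ s t : ℝ, s ∈ Set.Icc 0 T → t ∈ Set.Icc 0 T → s ≤ t →
      ‖x t - x s‖ ≤ L * (t - s) := by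
    intro s t hs ht hst
    have := hx.dist_le_mul t ht s hs
    rw [Real.dist_eq, abs_of_nonneg (by linarith)] at this
    calc ‖x t - x s‖ = dist (x t) (x s) := (dist_eq_norm _ _).symm
    _ ≤ (L.toNNReal : ℝ) * (t - s) := this
    _ = L * (t - s) := by rw [Real.coe_toNNReal L hL]
  have hcont : ContinuousOn (fun t => ψ (x t)) (Set.Icc 0 T) :=
    hψ.continuous.comp_continuousOn hx.continuousOn
  -- the key quantitative bound
  have key : ∀ a b : ℝ, a ∈ Set.Icc 0 T → b ∈ Set.Icc 0 T → a ≤ b →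
      |ψ (x b) - ψ (x a)| ≤ K * L * (b - a) := by
    intro a b ha hb hab
    have hK0 : 0 ≤ K := le_trans (norm_nonneg _) (hK a ha)
    rcases eq_or_lt_of_le hab with rfl | hab'
    · simp
    have hba : 0 < b - a := by linarith
    refine le_of_forall_pos_le_add ?_
    intro ε εpos
    have hL1 : (0:ℝ) < L + 1 := by linarith
    set ε₂ : ℝ := ε / ((b - a) * (L + 1)) with hε₂def
    have hε₂ : 0 < ε₂ := div_pos εpos (by positivity)
    set C : ℝ := K * L + ε / (b - a) with hC
    have hC0 : 0 < C := by positivity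
    -- continuous induction
    set s : Set ℝ := {t : ℝ | t ∈ Set.Icc a b → |ψ (x t) - ψ (x a)| ≤ C * (t - a)} with hsdef
    have hsub : Set.Icc a b ⊆ Set.Icc 0 T := Set.Icc_subset_Icc ha.1 hb.2
    have hclosed : IsClosed (s ∩ Set.Icc a b) := by
      have : s ∩ Set.Icc a b =
          Set.Icc a b ∩ (fun t => |ψ (x t) - ψ (x a)| - C * (t - a)) ⁻¹' Set.Iic 0 := by
        ext t
        simp only [hsdef, Set.mem_inter_iff, Set.mem_setOf_eq, Set.mem_preimage,
          Set.mem_Iic]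
        constructor
        · rintro ⟨h1, h2⟩; exact ⟨h2, by linarith [h1 h2]⟩
        · rintro ⟨h2, h1⟩; exact ⟨fun _ => by linarith, h2⟩
      rw [this]
      refine ContinuousOn.preimage_isClosed_of_isClosed ?_ isClosed_Icc isClosed_Iic
      have hconta : ContinuousOn (fun t => ψ (x t)) (Set.Icc a b) := hcont.mono hsub
      exact ((hconta.sub continuousOn_const).abs).sub
        (continuousOn_const.mul (continuousOn_id.sub continuousOn_const))
    have hIcc : Set.Icc a b ⊆ s := by
      apply hclosed.Icc_subset_of_forall_mem_nhdsWithin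
      · intro ht; simp
      · rintro u ⟨hus, hua, hub⟩
        have huT : u ∈ Set.Icc 0 T := hsub ⟨hua, le_of_lt hub⟩
        -- differentiability of ψ at x u
        have hdψ : HasFDerivAt ψ (fderiv ℝ ψ (x u)) (x u) :=
          (hψ.differentiable one_ne_zero).differentiableAt.hasFDerivAt
        have hlo := hdψ.isLittleO
        have := hlo.def hε₂
        rw [Metric.eventually_nhds_iff] at this
        obtain ⟨δ', δ'pos, hδ'⟩ := this
        set δ : ℝ := δ' / (L + 1) with hδdef
        have δpos : 0 < δ := div_pos δ'pos (by linarith)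
        have hmem : Set.Ioo u (u + δ) ∈ nhdsWithin u (Set.Ioi u) :=
          Ioo_mem_nhdsGT_of_mem ⟨le_rfl, by linarith⟩
        refine Filter.mem_of_superset hmem ?_
        rintro v ⟨huv, hvδ⟩ ⟨hva, hvb⟩
        have hvT : v ∈ Set.Icc 0 T := hsub ⟨hva, hvb⟩
        have hxd : ‖x v - x u‖ ≤ L * (v - u) := hdist u v huT hvT (le_of_lt huv)
        have h2 : L * δ ≤ δ' := by
          rw [hδdef]
          rw [mul_div_assoc']
          rw [div_le_iff₀ hL1]
          nlinarith
        have hxd' : ‖x v - x u‖ < δ' := by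
          rcases eq_or_lt_of_le hL with hL0 | hLpos
          · have h0 : L * (v - u) = 0 := by rw [← hL0]; ring
            rw [h0] at hxd
            linarith
          · have h1 : L * (v - u) < L * δ :=
              mul_lt_mul_of_pos_left (by linarith) hLpos
            linarith
        have hd : dist (x v) (x u) < δ' := by
          rw [dist_eq_norm]; exact hxd'
        have hstep := hδ' hd
        simp only [Real.norm_eq_abs] at hstep
        have hop : ‖(fderiv ℝ ψ (x u)) (x v - x u)‖ ≤ K * ‖x v - x u‖ :=
          le_trans ((fderiv ℝ ψ (x u)).le_opNorm _)
            (mul_le_mul_of_nonneg_right (hK u huT) (norm_nonneg _))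
        have hstep2 : |ψ (x v) - ψ (x u)| ≤ (K + ε₂) * ‖x v - x u‖ := by
          have : |ψ (x v) - ψ (x u)| ≤
              |ψ (x v) - ψ (x u) - (fderiv ℝ ψ (x u)) (x v - x u)| +
              ‖(fderiv ℝ ψ (x u)) (x v - x u)‖ := by
            rw [Real.norm_eq_abs] at *
            calc |ψ (x v) - ψ (x u)| =
                |(ψ (x v) - ψ (x u) - (fderiv ℝ ψ (x u)) (x v - x u)) +
                  (fderiv ℝ ψ (x u)) (x v - x u)| := by ring_nf
            _ ≤ _ := abs_add_le _ _
          calc |ψ (x v) - ψ (x u)| ≤ _ := this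
          _ ≤ ε₂ * ‖x v - x u‖ + K * ‖x v - x u‖ := by
              refine add_le_add ?_ hop
              exact hstep
          _ = (K + ε₂) * ‖x v - x u‖ := by ring
        have hstep3 : |ψ (x v) - ψ (x u)| ≤ C * (v - u) := by
          have hεL : ε₂ * L ≤ ε / (b - a) := by
            rw [hε₂def, div_mul_eq_mul_div, div_le_div_iff₀ (by positivity) hba]
            nlinarith
          calc |ψ (x v) - ψ (x u)| ≤ (K + ε₂) * ‖x v - x u‖ := hstep2
          _ ≤ (K + ε₂) * (L * (v - u)) := by
              refine mul_le_mul_of_nonneg_left hxd ?_; positivity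
          _ = K * L * (v - u) + ε₂ * L * (v - u) := by ring
          _ ≤ K * L * (v - u) + ε / (b - a) * (v - u) := by
              have := mul_le_mul_of_nonneg_right hεL (by linarith : (0:ℝ) ≤ v - u)
              linarith
          _ = C * (v - u) := by rw [hC]; ring
        have hu' : |ψ (x u) - ψ (x a)| ≤ C * (u - a) := hus ⟨hua, le_of_lt hub⟩
        calc |ψ (x v) - ψ (x a)| ≤ |ψ (x v) - ψ (x u)| + |ψ (x u) - ψ (x a)| := by
              have := abs_add_le (ψ (x v) - ψ (x u)) (ψ (x u) - ψ (x a))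
              simpa using this
        _ ≤ C * (v - u) + C * (u - a) := add_le_add hstep3 hu'
        _ = C * (v - a) := by ring
    have hb' := hIcc (Set.right_mem_Icc.mpr hab) (Set.right_mem_Icc.mpr hab)
    calc |ψ (x b) - ψ (x a)| ≤ C * (b - a) := hb'
    _ = K * L * (b - a) + ε / (b - a) * (b - a) := by ring
    _ = K * L * (b - a) + ε := by rw [div_mul_cancel₀]; linarith
  -- first conclusion
  have first : ∀ t₁ t₂ : ℝ, t₁ ∈ Set.Icc 0 T → t₂ ∈ Set.Icc 0 T → t₁ < t₂ →
      ψ (x t₁) = 0 → ψ (x t₂) = 1 → 1 / (K * L) ≤ t₂ - t₁ := by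
    intro t₁ t₂ h1 h2 h12 hv1 hv2
    have := key t₁ t₂ h1 h2 (le_of_lt h12)
    rw [hv1, hv2] at this
    simp only [sub_zero] at this
    rw [abs_one] at this
    have hKL : 0 < K * L := by
      by_contra h
      push_neg at h
      nlinarith
    rw [div_le_iff₀ hKL]
    nlinarith
  refine ⟨first, ?_⟩
  intro N ts hmono hmem htrans
  have hK0 : 0 ≤ K := le_trans (norm_nonneg _) (hK _ (hmem 0))
  rcases Nat.eq_zero_or_pos N with rfl | hN
  · have : (0:ℝ) ≤ T * K * L := by positivity
    have := Int.ceil_nonneg this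
    simp only [Nat.cast_zero]
    omega
  -- each gap is at least 1/(K*L) and K*L > 0
  have hgap : ∀ i : Fin N, 1 ≤ K * L * (ts i.succ - ts i.castSucc) := by
    intro i
    have hlt : ts i.castSucc < ts i.succ := hmono Fin.castSucc_lt_succ
    have hb := key (ts i.castSucc) (ts i.succ) (hmem _) (hmem _) (le_of_lt hlt)
    rcases htrans i with ⟨h0, h1⟩ | ⟨h1, h0⟩
    · rw [h0, h1] at hb; simpa using hb
    · rw [h0, h1] at hb
      simp only [zero_sub, abs_neg, abs_one] at hb
      exact hb
  have hKL : 0 ≤ K * L := mul_nonneg hK0 hL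
  -- telescoping
  have htel : ∀ i : Fin (N + 1), (i.1 : ℝ) ≤ K * L * (ts i - ts 0) := by
    intro i
    induction i using Fin.induction with
    | zero => simp
    | succ j ih =>
      have hg := hgap j
      have hcast : (j.succ.1 : ℝ) = (j.castSucc.1 : ℝ) + 1 := by
        simp [Fin.val_succ, Fin.coe_castSucc]
      have heq : K * L * (ts j.succ - ts 0) =
          K * L * (ts j.succ - ts j.castSucc) + K * L * (ts j.castSucc - ts 0) := by ring
      rw [hcast, heq]
      linarith
  have hlast := htel (Fin.last N)
  have h0T : ts 0 ∈ Set.Icc 0 T := hmem 0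
  have hlT : ts (Fin.last N) ∈ Set.Icc 0 T := hmem _
  have hdiff : ts (Fin.last N) - ts 0 ≤ T := by
    have := h0T.1; have := hlT.2; linarith
  have hNle : (N : ℝ) ≤ T * K * L := by
    have : (N : ℝ) ≤ K * L * (ts (Fin.last N) - ts 0) := by
      simpa [Fin.val_last] using hlast
    calc (N : ℝ) ≤ K * L * (ts (Fin.last N) - ts 0) := this
    _ ≤ K * L * T := by nlinarith
    _ = T * K * L := by ring
  have : (N : ℤ) ≤ ⌈T * K * L⌉ := by
    have := Int.le_ceil (T * K * L)
    exact_mod_cast Int.cast_le.mp (by push_cast; linarith : ((N:ℤ):ℝ) ≤ (⌈T * K * L⌉ : ℝ))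
  omega
end

section
/- Let z(t; z₀) on [0, t_f] be a solution of the hybrid system ż = ((1-w)f_A(x) + w f_B(x), 0) with jump law (w: 0→1 when ψ(x)=1, w: 1→0 when ψ(x)=0), with a single jump at time t_s ∈ (0, t_f). Let y(τ; y₀) = (x, w, t)(τ) be the corresponding time-freezing trajectory with y₀ = (z₀, 0), which follows the sliding dynamics (f_A(x),0,1) (resp. (f_B(x),0,1)) when t' = 1 and an auxiliary ODE of duration τ_jump = 1/γ(-1) during which x and t are frozen and w moves monotonically between 1 and 0 (or 0 and 1). Then for every τ with t'(τ) = 1, z(t(τ); z₀) = M y(τ; y₀) where M projects (x, w, t) onto (x, w). -/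
open Set Real

/-- Theorem 1 of the paper (solution equivalence), specialized to a single jump at
physical time `ts`. The hybrid trajectory is `z = (xz, wz)`, the time-freezing
trajectory is `y = (xy, wy, ty)`, the auxiliary phase lasts from `τs = ts` to
`τr = τs + 1/γ(-1)`, and `M` projects `(x, w, t)` onto `(x, w)`. -/
theorem stmt_19 (n : ℕ) (fA fB : (Fin n → ℝ) → (Fin n → ℝ))
    (hfAlip : ∃ KA : NNReal, LipschitzWith KA fA)
    (hfBlip : ∃ KB : NNReal, LipschitzWith KB fB)
    (ψ : (Fin n → ℝ) → ℝ) (a : ℝ) (ha : 0 < a) (γ : ℝ → ℝ)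
    (hγ : ∀ s, γ s = a * s ^ 2 / (1 + s ^ 2))
    (tf ts : ℝ) (hts : ts ∈ Set.Ioo 0 tf)
    -- hybrid-system trajectory z = (xz, wz), with a single jump at ts
    (xz : ℝ → Fin n → ℝ) (wz : ℝ → ℝ) (w0 : ℝ) (hw0 : w0 = 0 ∨ w0 = 1)
    (hxzc : Continuous xz)
    (hz1 : ∀ t ∈ Set.Ico 0 ts, wz t = w0 ∧
      HasDerivAt xz ((1 - w0) • fA (xz t) + w0 • fB (xz t)) t)
    (hjump : ψ (xz ts) = 1 - w0)
    (hz2 : ∀ t ∈ Set.Ioc ts tf, wz t = 1 - w0 ∧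
      HasDerivAt xz ((1 - (1 - w0)) • fA (xz t) + (1 - w0) • fB (xz t)) t)
    -- time-freezing trajectory y = (xy, wy, ty)
    (τf τs τr : ℝ) (hτs : τs = ts) (hτr : τr = τs + 1 / γ (-1))
    (hτf : τf = tf + 1 / γ (-1))
    (xy : ℝ → Fin n → ℝ) (wy ty : ℝ → ℝ)
    (hxyc : Continuous xy) (htyc : Continuous ty)
    (hy0 : xy 0 = xz 0 ∧ wy 0 = w0 ∧ ty 0 = 0)
    -- first sliding phase: dynamics of the active mode with clock rate 1
    (hs1 : ∀ τ ∈ Set.Ico 0 τs, wy τ = w0 ∧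
      HasDerivAt xy ((1 - w0) • fA (xy τ) + w0 • fB (xy τ)) τ ∧
      HasDerivAt ty 1 τ)
    -- auxiliary phase: x and t frozen, w moves monotonically from w0 to 1 - w0
    (haux1 : ∀ τ ∈ Set.Icc τs τr, xy τ = xy τs ∧ ty τ = ty τs ∧
      wy τ ∈ Set.Icc (0 : ℝ) 1)
    (haux2 : wy τs = w0 ∧ wy τr = 1 - w0)
    (haux3 : MonotoneOn (fun τ => |wy τ - w0|) (Set.Icc τs τr))
    -- second sliding phase
    (hs2 : ∀ τ ∈ Set.Ioc τr τf, wy τ = 1 - w0 ∧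
      HasDerivAt xy ((1 - (1 - w0)) • fA (xy τ) + (1 - w0) • fB (xy τ)) τ ∧
      HasDerivAt ty 1 τ) :
    ∀ τ ∈ Set.Icc 0 τf, HasDerivAt ty 1 τ →
      ((xz (ty τ), wz (ty τ)) : (Fin n → ℝ) × ℝ) = (xy τ, wy τ) := by
  obtain ⟨KA, hKA⟩ := hfAlip
  obtain ⟨KB, hKB⟩ := hfBlip
  set F : (Fin n → ℝ) → (Fin n → ℝ) := fun x => (1 - w0) • fA x + w0 • fB x with hFdef
  set G : (Fin n → ℝ) → (Fin n → ℝ) :=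
    fun x => (1 - (1 - w0)) • fA x + (1 - w0) • fB x with hGdef
  obtain ⟨K1, hK1⟩ : ∃ K : NNReal, LipschitzWith K F := by
    rcases hw0 with h | h <;> subst h
    · exact ⟨KA, by simpa [hFdef] using hKA⟩
    · exact ⟨KB, by simpa [hFdef] using hKB⟩
  obtain ⟨K2, hK2⟩ : ∃ K : NNReal, LipschitzWith K G := by
    rcases hw0 with h | h <;> subst h
    · exact ⟨KB, by simpa [hGdef] using hKB⟩
    · exact ⟨KA, by simpa [hGdef] using hKA⟩
  have hγ1 : γ (-1) = a / 2 := by rw [hγ]; norm_num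
  have hc : (0:ℝ) < 1 / γ (-1) := by rw [hγ1]; positivity
  have hτsr : τs < τr := by rw [hτr]; linarith
  have hτsts : τs = ts := hτs
  have hts0 : (0:ℝ) < ts := hts.1
  -- Step A : ty = id on [0, τs]
  have htyid : ∀ σ ∈ Icc (0:ℝ) τs, ty σ = σ := by
    have := eq_of_has_deriv_right_eq (f := ty) (g := fun σ => σ) (f' := fun _ => 1)
      (a := 0) (b := τs)
      (fun σ hσ => ((hs1 σ hσ).2.2).hasDerivWithinAt)
      (fun σ _ => (hasDerivAt_id σ).hasDerivWithinAt)
      htyc.continuousOn (continuous_id.continuousOn)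
      (by simpa using hy0.2.2)
    exact this
  -- Step B : xy = xz on [0, τs]
  have hxyz : ∀ σ ∈ Icc (0:ℝ) τs, xy σ = xz σ := by
    intro σ hσ
    refine ODE_solution_unique_of_mem_Icc_right (v := fun _ x => F x)
      (s := fun _ => (univ : Set (Fin n → ℝ))) (K := K1)
      (fun _ _ => hK1.lipschitzOnWith)
      hxyc.continuousOn
      (fun t ht => ((hs1 t ht).2.1).hasDerivWithinAt)
      (fun _ _ => mem_univ _)
      hxzc.continuousOn
      (fun t ht => ((hz1 t (by rw [← hτsts]; exact ht)).2).hasDerivWithinAt)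
      (fun _ _ => mem_univ _)
      hy0.1 hσ
  have htyts : ty τs = ts := by rw [htyid τs ⟨le_of_lt (hτsts ▸ hts0), le_refl τs⟩]; exact hτsts
  have htyτr : ty τr = ts := by
    rw [(haux1 τr ⟨le_of_lt hτsr, le_refl τr⟩).2.1, htyts]
  have hτfτr : τf - τr = tf - ts := by rw [hτf, hτr, hτs]; ring
  -- shifted hybrid trajectory for the second phase
  set g : ℝ → Fin n → ℝ := fun σ => xz (σ - τr + ts) with hgdef
  have hgc : Continuous g := hxzc.comp ((continuous_id.sub continuous_const).add continuous_const)
  have hg' : ∀ σ ∈ Ioc τr τf, HasDerivAt g (G (g σ)) σ := by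
    intro σ hσ
    have h1 : HasDerivAt (fun σ : ℝ => σ - τr + ts) 1 σ := by
      simpa using ((hasDerivAt_id σ).sub_const τr).add_const ts
    have hmem : σ - τr + ts ∈ Ioc ts tf := ⟨by linarith [hσ.1], by linarith [hσ.2, hτfτr]⟩
    have h2 := (hz2 _ hmem).2
    have := HasDerivAt.scomp (𝕜 := ℝ) σ h2 h1
    simp only [one_smul] at this
    exact this
  intro τ hτ hder
  rcases lt_or_ge τ τs with hcase1 | hge
  · -- first sliding phase
    have hτIcc : τ ∈ Icc (0:ℝ) τs := ⟨hτ.1, le_of_lt hcase1⟩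
    have hty : ty τ = τ := htyid τ hτIcc
    have hτIco : τ ∈ Ico (0:ℝ) ts := ⟨hτ.1, hτsts ▸ hcase1⟩
    have hwz : wz (ty τ) = w0 := by rw [hty]; exact (hz1 τ hτIco).1
    have hwy : wy τ = w0 := (hs1 τ ⟨hτ.1, hcase1⟩).1
    have hxx : xz (ty τ) = xy τ := by rw [hty, hxyz τ hτIcc]
    simp only [Prod.mk.injEq]
    exact ⟨hxx, by rw [hwz, hwy]⟩
  rcases le_or_gt τ τr with hcase2 | hcase3
  · -- auxiliary phase : contradiction with ty' = 1
    exfalso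
    have hτIcc : τ ∈ Icc τs τr := ⟨hge, hcase2⟩
    have hU : UniqueDiffWithinAt ℝ (Icc τs τr) τ := uniqueDiffOn_Icc hτsr τ hτIcc
    have h0 : HasDerivWithinAt ty 0 (Icc τs τr) τ :=
      (hasDerivWithinAt_const τ _ (ty τs)).congr
        (fun σ hσ => (haux1 σ hσ).2.1) ((haux1 τ hτIcc).2.1)
    have h1 : HasDerivWithinAt ty 1 (Icc τs τr) τ := hder.hasDerivWithinAt
    have := h0.derivWithin hU ▸ h1.derivWithin hU
    norm_num at this
  · -- second sliding phase
    have htyτ : ty τ = τ - τr + ts := by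
      obtain ⟨c, hcmem, hc⟩ := exists_hasDerivAt_eq_slope ty (fun _ => (1:ℝ)) hcase3
        htyc.continuousOn
        (fun σ hσ => (hs2 σ ⟨hσ.1, le_of_lt (lt_of_lt_of_le hσ.2 hτ.2)⟩).2.2)
      have hne : τ - τr ≠ 0 := sub_ne_zero.mpr (ne_of_gt hcase3)
      rw [htyτr] at hc
      field_simp at hc
      linarith
    have htymem : ty τ ∈ Ioc ts tf := by
      rw [htyτ]; exact ⟨by linarith, by linarith [hτ.2, hτfτr]⟩
    have hwz : wz (ty τ) = 1 - w0 := (hz2 _ htymem).1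
    have hwy : wy τ = 1 - w0 := (hs2 τ ⟨hcase3, hτ.2⟩).1
    -- key: g = xy on (τr, τf] by Grönwall + limiting argument
    have hgτr : g τr = xy τr := by
      have h1 : g τr = xz ts := by simp [hgdef]
      have h2 : xy τr = xz ts := by
        rw [(haux1 τr ⟨le_of_lt hτsr, le_refl τr⟩).1,
          hxyz τs ⟨le_of_lt (hτsts ▸ hts0), le_refl τs⟩, hτsts]
      rw [h1, h2]
    have key : ∀ σ ∈ Ioc τr τ,
        dist (g τ) (xy τ) ≤ dist (g σ) (xy σ) * Real.exp (K2 * (τ - σ)) := by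
      intro σ hσ
      refine dist_le_of_trajectories_ODE (v := fun _ x => G x) (K := K2)
        (fun _ => hK2) hgc.continuousOn
        (fun t ht => (hg' t ⟨lt_of_lt_of_le hσ.1 ht.1,
          le_of_lt (lt_of_lt_of_le ht.2 hτ.2)⟩).hasDerivWithinAt)
        hxyc.continuousOn
        (fun t ht => ((hs2 t ⟨lt_of_lt_of_le hσ.1 ht.1,
          le_of_lt (lt_of_lt_of_le ht.2 hτ.2)⟩).2.1).hasDerivWithinAt)
        (le_refl _) τ ⟨hσ.2, le_refl τ⟩
    have hlim : Filter.Tendsto (fun σ => dist (g σ) (xy σ) * Real.exp (K2 * (τ - σ)))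
        (nhdsWithin τr (Ioi τr)) (nhds 0) := by
      have hcont : Continuous fun σ => dist (g σ) (xy σ) * Real.exp (K2 * (τ - σ)) := by
        exact ((hgc.dist hxyc)).mul (Real.continuous_exp.comp (continuous_const.mul (continuous_const.sub continuous_id)))
      have := (hcont.tendsto τr).mono_left (nhdsWithin_le_nhds (s := Ioi τr))
      simpa [hgτr] using this
    have hev : ∀ᶠ σ in nhdsWithin τr (Ioi τr),
        dist (g τ) (xy τ) ≤ dist (g σ) (xy σ) * Real.exp (K2 * (τ - σ)) := by
      filter_upwards [Ioc_mem_nhdsGT_of_mem ⟨le_refl τr, hcase3⟩] with σ hσ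
      exact key σ hσ
    have hle : dist (g τ) (xy τ) ≤ 0 := ge_of_tendsto hlim hev
    have hgeq : g τ = xy τ := by
      rw [← dist_le_zero]; exact hle
    have hxx : xz (ty τ) = xy τ := by rw [htyτ]; exact hgeq
    simp only [Prod.mk.injEq]
    exact ⟨hxx, by rw [hwz, hwy]⟩
end
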